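/- Let X₁,…,X_n be independent random variables and let T(X,q,q') = Σᵢ ψ(√(q'ᵢ(Xᵢ)/qᵢ(Xᵢ))) where ψ : [0,∞] → [−1,1] satisfies ∫ψ(√(q'ᵢ/qᵢ))dPᵢ ≤ a₀h²(Pᵢ,Qᵢ) − a₁h²(Pᵢ,Q'ᵢ) and ψ(1/x) = −ψ(x). Then a₁𝐡²(P,Q) − a₀𝐡²(P,Q') ≤ E[T(X,q,q')] ≤ a₀𝐡²(P,Q) − a₁𝐡²(P,Q'), where 𝐡²(P,Q) = Σᵢ h²(Pᵢ,Qᵢ). -/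

import Mathlib

open MeasureTheory
open scoped ENNReal

/-- The squared Hellinger distance between two finite measures. -/
noncomputable def hellingerSq {α : Type*} [MeasurableSpace α] (P Q : Measure α) : ℝ :=
  (1 / 2) * ∫ x, (Real.sqrt ((P.rnDeriv (P + Q)) x).toReal
      - Real.sqrt ((Q.rnDeriv (P + Q)) x).toReal) ^ 2 ∂(P + Q)

/-- `ratio q q' x` is `q' x / q x` with the conventions `0/0 = 1` and
`a/0 = +∞` for `a > 0`. -/
noncomputable def ratio {β : Type*} (q q' : β → ℝ≥0∞) (x : β) : ℝ≥0∞ :=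
  if q x = 0 ∧ q' x = 0 then 1 else q' x / q x

/-!
Under the product measure the coordinates are distributed according to the `P i`, so by
linearity the expectation of `T` is the sum of the one-dimensional expectations, and summing
the assumed bounds gives the upper bound. The antisymmetry `ψ (1/x) = -ψ x` turns the
integrand for `(q', q)` into the negative of the one for `(q, q')`, so the assumed bound for
the swapped pair is the lower bound, coordinate by coordinate.
-/

lemma integral_sum_comp_eval_pi {ι : Type*} [Fintype ι] {X : ι → Type*}
    [∀ i, MeasurableSpace (X i)] {μ : ∀ i, Measure (X i)} [∀ i, IsProbabilityMeasure (μ i)]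
    {E : Type*} [NormedAddCommGroup E] [NormedSpace ℝ E] {f : ∀ i, X i → E}
    (hf : ∀ i, Integrable (f i) (μ i)) :
    ∫ x, ∑ i, f i (x i) ∂Measure.pi μ = ∑ i, ∫ y, f i y ∂μ i := by
  rw [integral_finsetSum _ fun i _ => integrable_comp_eval (hf i)]
  exact Finset.sum_congr rfl fun i _ => integral_comp_eval (hf i).aestronglyMeasurable

lemma apply_inv_eq_neg_of_ne_top {ψ : ℝ≥0∞ → ℝ} (hanti : ∀ x : ℝ≥0∞, x ≠ ⊤ → ψ x⁻¹ = -ψ x)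
    (x : ℝ≥0∞) : ψ x⁻¹ = -ψ x := by
  rcases eq_or_ne x ⊤ with rfl | hx
  · have h0 := hanti 0 ENNReal.zero_ne_top
    rw [ENNReal.inv_zero] at h0
    rw [ENNReal.inv_top, h0, neg_neg]
  · exact hanti x hx

section ratio

variable {β : Type*} (q q' : β → ℝ≥0∞)

lemma measurable_ratio [MeasurableSpace β] (hq : Measurable q) (hq' : Measurable q') :
    Measurable (ratio q q') :=
  Measurable.ite ((hq (measurableSet_singleton 0)).inter (hq' (measurableSet_singleton 0)))
    measurable_const (hq'.div hq)

lemma ratio_swap {x : β} (hx : q x ≠ ⊤) : ratio q' q x = (ratio q q' x)⁻¹ := by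
  unfold ratio
  by_cases hq0 : q x = 0 <;> by_cases hq'0 : q' x = 0
  · simp [hq0, hq'0]
  · simp [hq0, hq'0, ENNReal.div_zero hq'0]
  · simp [hq0, hq'0, ENNReal.div_zero hq0]
  · simp only [hq0, hq'0, and_false, if_false]
    rw [ENNReal.inv_div (Or.inl hx) (Or.inl hq0)]

lemma integral_apply_ratio_rpow_swap [MeasurableSpace β] (P : Measure β) (hq : ∀ x, q x ≠ ⊤)
    {ψ : ℝ≥0∞ → ℝ} (hanti : ∀ x : ℝ≥0∞, x ≠ ⊤ → ψ x⁻¹ = -ψ x) (p : ℝ) :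
    ∫ x, ψ (ratio q' q x ^ p) ∂P = -∫ x, ψ (ratio q q' x ^ p) ∂P := by
  rw [← integral_neg]
  congr with x
  rw [ratio_swap q q' (hq x), ENNReal.inv_rpow, apply_inv_eq_neg_of_ne_top hanti]

end ratio

theorem stmt16_general (n : ℕ) (α : Fin n → Type*) [∀ i, MeasurableSpace (α i)]
    (P : ∀ i, Measure (α i)) [∀ i, IsProbabilityMeasure (P i)]
    (μ : ∀ i, Measure (α i))
    (q q' : ∀ i, α i → ℝ≥0∞)
    (hq : ∀ i, Measurable (q i)) (hq' : ∀ i, Measurable (q' i))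
    (hqfin : ∀ i x, q i x ≠ ⊤)
    (ψ : ℝ≥0∞ → ℝ) (hψm : Measurable ψ) (hψb : ∀ x, |ψ x| ≤ 1)
    (hanti : ∀ x : ℝ≥0∞, x ≠ ⊤ → ψ x⁻¹ = -ψ x)
    (a₀ a₁ : ℝ)
    (hesp : ∀ i, ∫ x, ψ ((ratio (q i) (q' i) x) ^ (1 / 2 : ℝ)) ∂(P i)
        ≤ a₀ * hellingerSq (P i) ((μ i).withDensity (q i))
          - a₁ * hellingerSq (P i) ((μ i).withDensity (q' i)))
    (hesp' : ∀ i, ∫ x, ψ ((ratio (q' i) (q i) x) ^ (1 / 2 : ℝ)) ∂(P i)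
        ≤ a₀ * hellingerSq (P i) ((μ i).withDensity (q' i))
          - a₁ * hellingerSq (P i) ((μ i).withDensity (q i))) :
    a₁ * (∑ i, hellingerSq (P i) ((μ i).withDensity (q i)))
        - a₀ * (∑ i, hellingerSq (P i) ((μ i).withDensity (q' i)))
      ≤ ∫ x, (∑ i, ψ ((ratio (q i) (q' i) (x i)) ^ (1 / 2 : ℝ))) ∂(Measure.pi P) ∧
    ∫ x, (∑ i, ψ ((ratio (q i) (q' i) (x i)) ^ (1 / 2 : ℝ))) ∂(Measure.pi P)
      ≤ a₀ * (∑ i, hellingerSq (P i) ((μ i).withDensity (q i)))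
        - a₁ * (∑ i, hellingerSq (P i) ((μ i).withDensity (q' i))) := by
  have hint : ∀ i, Integrable (fun x => ψ (ratio (q i) (q' i) x ^ (1 / 2 : ℝ))) (P i) :=
    fun i => .of_bound
      (hψm.comp ((measurable_ratio _ _ (hq i) (hq' i)).pow_const _)).aestronglyMeasurable 1
      (ae_of_all _ fun x => hψb _)
  have hlow : ∀ i, a₁ * hellingerSq (P i) ((μ i).withDensity (q i))
        - a₀ * hellingerSq (P i) ((μ i).withDensity (q' i))
      ≤ ∫ x, ψ (ratio (q i) (q' i) x ^ (1 / 2 : ℝ)) ∂(P i) := fun i => by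
    have := hesp' i
    rw [integral_apply_ratio_rpow_swap _ _ _ (hqfin i) hanti] at this
    linarith
  rw [integral_sum_comp_eval_pi hint, Finset.mul_sum, Finset.mul_sum, Finset.mul_sum,
    Finset.mul_sum, ← Finset.sum_sub_distrib, ← Finset.sum_sub_distrib]
  exact ⟨Finset.sum_le_sum fun i _ => hlow i, Finset.sum_le_sum fun i _ => hesp i⟩

theorem stmt16 (n : ℕ) (α : Fin n → Type*) [∀ i, MeasurableSpace (α i)]
    (P : ∀ i, Measure (α i)) [∀ i, IsProbabilityMeasure (P i)]
    (μ : ∀ i, Measure (α i)) [∀ i, SigmaFinite (μ i)]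
    (q q' : ∀ i, α i → ℝ≥0∞)
    (hq : ∀ i, Measurable (q i)) (hq' : ∀ i, Measurable (q' i))
    (hqfin : ∀ i x, q i x ≠ ⊤) (hq'fin : ∀ i x, q' i x ≠ ⊤)
    [∀ i, IsProbabilityMeasure ((μ i).withDensity (q i))]
    [∀ i, IsProbabilityMeasure ((μ i).withDensity (q' i))]
    (ψ : ℝ≥0∞ → ℝ) (hψm : Measurable ψ) (hψb : ∀ x, |ψ x| ≤ 1)
    (hanti : ∀ x : ℝ≥0∞, x ≠ ⊤ → ψ x⁻¹ = -ψ x)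
    (a₀ a₁ : ℝ) (ha₀ : 1 ≤ a₀) (ha₁ : 0 < a₁) (ha₁' : a₁ ≤ 1)
    (hesp : ∀ i, ∫ x, ψ ((ratio (q i) (q' i) x) ^ (1 / 2 : ℝ)) ∂(P i)
        ≤ a₀ * hellingerSq (P i) ((μ i).withDensity (q i))
          - a₁ * hellingerSq (P i) ((μ i).withDensity (q' i)))
    (hesp' : ∀ i, ∫ x, ψ ((ratio (q' i) (q i) x) ^ (1 / 2 : ℝ)) ∂(P i)
        ≤ a₀ * hellingerSq (P i) ((μ i).withDensity (q' i))
          - a₁ * hellingerSq (P i) ((μ i).withDensity (q i))) :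
    a₁ * (∑ i, hellingerSq (P i) ((μ i).withDensity (q i)))
        - a₀ * (∑ i, hellingerSq (P i) ((μ i).withDensity (q' i)))
      ≤ ∫ x, (∑ i, ψ ((ratio (q i) (q' i) (x i)) ^ (1 / 2 : ℝ))) ∂(Measure.pi P) ∧
    ∫ x, (∑ i, ψ ((ratio (q i) (q' i) (x i)) ^ (1 / 2 : ℝ))) ∂(Measure.pi P)
      ≤ a₀ * (∑ i, hellingerSq (P i) ((μ i).withDensity (q i)))
        - a₁ * (∑ i, hellingerSq (P i) ((μ i).withDensity (q' i))) :=
  stmt16_general n α P μ q q' hq hq' hqfin ψ hψm hψb hanti a₀ a₁ hesp hesp'
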